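/- arXiv:1511.09243 — 3 statements merged into one kernel-verified Lean document; each statement's English description precedes it below -/
import Mathlib

section
/- Suppose r > 0 and θ satisfy 0 = p₁ + r(s₁ - cos 12θ) and 0 = p₂ + r(s₂ + sin 12θ), with cos(6θ) ≠ 0. Then t = tan(6θ) satisfies the quadratic equation (-p₂ + p₁s₂ - p₂s₁)t² + 2p₁ t + p₂ + p₁s₂ - p₂s₁ = 0. -/
open Real

/-! Both equations say that `(p₁, p₂)` is `r` times `(cos 12θ - s₁, -(sin 12θ + s₂))`, so the
cross product `p₂ (cos 12θ - s₁) + p₁ (sin 12θ + s₂)` vanishes. The tangent half-angle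
substitution `cos 12θ = (1 - t²)/(1 + t²)`, `sin 12θ = 2t/(1 + t²)` with `t = tan 6θ` turns this
into the quadratic, after clearing the denominator `1 + t²`. -/

lemma cos_two_mul_ne_neg_one {x : ℝ} (hx : cos x ≠ 0) : cos (2 * x) ≠ -1 := by
  rw [cos_two_mul]
  have : 0 < cos x ^ 2 := by positivity
  linarith

theorem equilibria_quadratic_general (p₁ p₂ s₁ s₂ r θ : ℝ)
    (h1 : p₁ + r * (s₁ - Real.cos (12 * θ)) = 0)
    (h2 : p₂ + r * (s₂ + Real.sin (12 * θ)) = 0)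
    (hc : Real.cos (6 * θ) ≠ 0) :
    (-p₂ + p₁ * s₂ - p₂ * s₁) * Real.tan (6 * θ) ^ 2 + 2 * p₁ * Real.tan (6 * θ)
      + (p₂ + p₁ * s₂ - p₂ * s₁) = 0 := by
  have hhalf : 12 * θ / 2 = 6 * θ := by ring
  have hcos : cos (12 * θ) = (1 - tan (6 * θ) ^ 2) / (1 + tan (6 * θ) ^ 2) := by
    have hne : cos (12 * θ) ≠ -1 := by
      simpa only [← hhalf, mul_div_cancel₀ _ (two_ne_zero' ℝ)] using cos_two_mul_ne_neg_one hc
    rw [cos_eq_two_mul_tan_half_div_one_sub_tan_half_sq _ hne, hhalf]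
  have hsin : sin (12 * θ) = 2 * tan (6 * θ) / (1 + tan (6 * θ) ^ 2) := by
    rw [sin_eq_two_mul_tan_half_div_one_add_tan_half_sq, hhalf]
  have hcross : p₂ * (cos (12 * θ) - s₁) + p₁ * (sin (12 * θ) + s₂) = 0 := by
    linear_combination (cos (12 * θ) - s₁) * h2 + (sin (12 * θ) + s₂) * h1
  rw [hcos, hsin] at hcross
  field_simp at hcross
  linear_combination hcross

theorem equilibria_quadratic (p₁ p₂ s₁ s₂ r θ : ℝ) (hr : 0 < r)
    (h1 : p₁ + r * (s₁ - Real.cos (12 * θ)) = 0)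
    (h2 : p₂ + r * (s₂ + Real.sin (12 * θ)) = 0)
    (hc : Real.cos (6 * θ) ≠ 0) :
    (-p₂ + p₁ * s₂ - p₂ * s₁) * Real.tan (6 * θ) ^ 2 + 2 * p₁ * Real.tan (6 * θ)
      + (p₂ + p₁ * s₂ - p₂ * s₁) = 0 :=
  equilibria_quadratic_general p₁ p₂ s₁ s₂ r θ h1 h2 hc
end

section
/- Suppose s₂ > 1, p₂ < 0, and Q(p₁,p₂) := p₁² + p₂² - (p₁s₂ - p₂s₁)² < 0. Then the system p₁ + r(s₁ - cos 12θ) = 0, p₂ + r(s₂ + sin 12θ) = 0 has no solution with r > 0. -/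
open Real

theorem no_nonzero_equilibria_Q_neg (p₁ p₂ s₁ s₂ : ℝ) (hs : 1 < s₂) (hp : p₂ < 0)
    (hQ : p₁ ^ 2 + p₂ ^ 2 - (p₁ * s₂ - p₂ * s₁) ^ 2 < 0) :
    ¬ ∃ (r θ : ℝ), 0 < r ∧ p₁ + r * (s₁ - Real.cos (12 * θ)) = 0 ∧
      p₂ + r * (s₂ + Real.sin (12 * θ)) = 0 := by
  rintro ⟨r, θ, hr, h1, h2⟩
  set c := Real.cos (12 * θ)
  set s := Real.sin (12 * θ)
  have hcs : s ^ 2 + c ^ 2 = 1 := Real.sin_sq_add_cos_sq _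
  have hp1 : p₁ = -r * (s₁ - c) := by linarith
  have hp2 : p₂ = -r * (s₂ + s) := by linarith
  subst hp1 hp2
  have key : (-r * (s₁ - c)) ^ 2 + (-r * (s₂ + s)) ^ 2 -
      (-r * (s₁ - c) * s₂ - -r * (s₂ + s) * s₁) ^ 2 = (r * (s₁ * c - s₂ * s - 1)) ^ 2 := by
    linear_combination (r ^ 2 * (1 - s₁ ^ 2 - s₂ ^ 2)) * hcs
  rw [key] at hQ
  nlinarith [sq_nonneg (r * (s₁ * c - s₂ * s - 1))]
end

section
/- Suppose s₂ > 1, p₂ < 0, and Q(p₁,p₂) = p₁² + p₂² - (p₁s₂ - p₂s₁)² > 0. Then in the interval (-π/12, π/12) there are exactly two angles θ₊ ≠ θ₋ for which there exists r > 0 with p₁ + r(s₁ - cos 12θ) = 0 and p₂ + r(s₂ + sin 12θ) = 0; they are given by θ_± = (1/6)·arctan(Δ_±) with Δ_± = (p₁ ± √Q)/(p₂ - p₁s₂ + p₂s₁), and the corresponding radii are r_± = -p₂/(s₂ + sin(12θ_±)). -/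
/-!
With `t = tan 6θ`, the tangent half-angle formulas turn `sin 12θ` and `cos 12θ` into rational
functions of `t`. Eliminating `r` from the two equations leaves `p₁ (s₂ + sin 12θ) = p₂ (s₁ - cos 12θ)`,
which after clearing `1 + t²` is the quadratic `d t² - 2 p₁ t + (p₂ s₁ - p₁ s₂ - p₂) = 0` with
`d = p₂ - p₁ s₂ + p₂ s₁`, whose discriminant is `4 Q`. Its two roots `Δ±` give the two angles, since
`θ ↦ tan 6θ` is a bijection from `(-π/12, π/12)` onto `ℝ`. Conversely, as `s₂ > 1` the
quantity `s₂ + sin 12θ` is positive, so `r = -p₂ / (s₂ + sin 12θ)` is a positive solution.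
-/

open Real Set

theorem Real.sin_two_mul_arctan (t : ℝ) : sin (2 * arctan t) = 2 * t / (1 + t ^ 2) := by
  rw [sin_two_mul, ← tan_mul_cos (cos_arctan_pos t).ne', tan_arctan,
    show 2 * (t * cos (arctan t)) * cos (arctan t) = 2 * t * cos (arctan t) ^ 2 by ring,
    cos_sq_arctan]
  ring

theorem Real.cos_two_mul_arctan (t : ℝ) : cos (2 * arctan t) = (1 - t ^ 2) / (1 + t ^ 2) := by
  rw [cos_two_mul, cos_sq_arctan]
  field_simp
  ring

theorem mul_eq_mul_of_add_mul_eq_zero {R : Type*} [CommRing R] {p₁ p₂ r a b : R}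
    (h₁ : p₁ + r * a = 0) (h₂ : p₂ + r * b = 0) : p₁ * b = p₂ * a := by
  linear_combination b * h₁ - a * h₂

section

variable {p₁ p₂ s₁ s₂ : ℝ}

theorem radius_solves_of_mul_eq_mul (hs : 1 < s₂) (hp : p₂ < 0) {φ : ℝ}
    (h : p₁ * (s₂ + sin φ) = p₂ * (s₁ - cos φ)) :
    0 < -p₂ / (s₂ + sin φ) ∧
      p₁ + (-p₂ / (s₂ + sin φ)) * (s₁ - cos φ) = 0 ∧
      p₂ + (-p₂ / (s₂ + sin φ)) * (s₂ + sin φ) = 0 := by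
  have hS : 0 < s₂ + sin φ := by linarith [neg_one_le_sin φ]
  refine ⟨div_pos (neg_pos.2 hp) hS, ?_, ?_⟩
  · field_simp
    linear_combination h
  · field_simp
    ring

theorem mul_eq_mul_two_mul_arctan_iff (t : ℝ) :
    p₁ * (s₂ + sin (2 * arctan t)) = p₂ * (s₁ - cos (2 * arctan t)) ↔
      (p₂ - p₁ * s₂ + p₂ * s₁) * (t * t) + -2 * p₁ * t + (p₂ * s₁ - p₁ * s₂ - p₂) = 0 := by
  have ht : (0 : ℝ) < 1 + t ^ 2 := by positivity
  rw [sin_two_mul_arctan, cos_two_mul_arctan, ← sub_eq_zero]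
  rw [show p₁ * (s₂ + 2 * t / (1 + t ^ 2)) - p₂ * (s₁ - (1 - t ^ 2) / (1 + t ^ 2)) =
      -((p₂ - p₁ * s₂ + p₂ * s₁) * (t * t) + -2 * p₁ * t + (p₂ * s₁ - p₁ * s₂ - p₂)) /
        (1 + t ^ 2) by field_simp; ring]
  rw [div_eq_zero_iff, neg_eq_zero, or_iff_left ht.ne']

theorem mul_eq_mul_two_mul_arctan_iff_eq_or_eq (hd : p₂ - p₁ * s₂ + p₂ * s₁ ≠ 0)
    (hQ : 0 ≤ p₁ ^ 2 + p₂ ^ 2 - (p₁ * s₂ - p₂ * s₁) ^ 2) (t : ℝ) :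
    p₁ * (s₂ + sin (2 * arctan t)) = p₂ * (s₁ - cos (2 * arctan t)) ↔
      t = (p₁ + √(p₁ ^ 2 + p₂ ^ 2 - (p₁ * s₂ - p₂ * s₁) ^ 2)) / (p₂ - p₁ * s₂ + p₂ * s₁) ∨
      t = (p₁ - √(p₁ ^ 2 + p₂ ^ 2 - (p₁ * s₂ - p₂ * s₁) ^ 2)) / (p₂ - p₁ * s₂ + p₂ * s₁) := by
  set q := √(p₁ ^ 2 + p₂ ^ 2 - (p₁ * s₂ - p₂ * s₁) ^ 2)
  have hdiscrim : discrim (p₂ - p₁ * s₂ + p₂ * s₁) (-2 * p₁) (p₂ * s₁ - p₁ * s₂ - p₂) =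
      (2 * q) * (2 * q) := by
    rw [discrim]
    linear_combination (-4 : ℝ) * sq_sqrt hQ
  rw [mul_eq_mul_two_mul_arctan_iff, quadratic_eq_zero_iff hd hdiscrim,
    show (-(-2 * p₁) + 2 * q) / (2 * (p₂ - p₁ * s₂ + p₂ * s₁)) =
      (p₁ + q) / (p₂ - p₁ * s₂ + p₂ * s₁) by field_simp,
    show (-(-2 * p₁) - 2 * q) / (2 * (p₂ - p₁ * s₂ + p₂ * s₁)) =
      (p₁ - q) / (p₂ - p₁ * s₂ + p₂ * s₁) by field_simp]

end

theorem exactly_two_angles (p₁ p₂ s₁ s₂ : ℝ) (hs : 1 < s₂) (hp : p₂ < 0)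
    (hQ : 0 < p₁ ^ 2 + p₂ ^ 2 - (p₁ * s₂ - p₂ * s₁) ^ 2)
    (hd : p₂ - p₁ * s₂ + p₂ * s₁ ≠ 0)
    (θp θm : ℝ)
    (hθp : θp = (1 / 6) * Real.arctan
      ((p₁ + Real.sqrt (p₁ ^ 2 + p₂ ^ 2 - (p₁ * s₂ - p₂ * s₁) ^ 2))
        / (p₂ - p₁ * s₂ + p₂ * s₁)))
    (hθm : θm = (1 / 6) * Real.arctan
      ((p₁ - Real.sqrt (p₁ ^ 2 + p₂ ^ 2 - (p₁ * s₂ - p₂ * s₁) ^ 2))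
        / (p₂ - p₁ * s₂ + p₂ * s₁))) :
    θp ≠ θm ∧
    θp ∈ Set.Ioo (-(Real.pi / 12)) (Real.pi / 12) ∧
    θm ∈ Set.Ioo (-(Real.pi / 12)) (Real.pi / 12) ∧
    (∀ θ ∈ ({θp, θm} : Set ℝ),
      0 < -p₂ / (s₂ + Real.sin (12 * θ)) ∧
      p₁ + (-p₂ / (s₂ + Real.sin (12 * θ))) * (s₁ - Real.cos (12 * θ)) = 0 ∧
      p₂ + (-p₂ / (s₂ + Real.sin (12 * θ))) * (s₂ + Real.sin (12 * θ)) = 0) ∧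
    (∀ θ ∈ Set.Ioo (-(Real.pi / 12)) (Real.pi / 12),
      (∃ r : ℝ, 0 < r ∧ p₁ + r * (s₁ - Real.cos (12 * θ)) = 0 ∧
        p₂ + r * (s₂ + Real.sin (12 * θ)) = 0) → θ = θp ∨ θ = θm) := by
  subst hθp hθm
  have roots := mul_eq_mul_two_mul_arctan_iff_eq_or_eq hd hQ.le
  have mem (x : ℝ) : 1 / 6 * arctan x ∈ Ioo (-(π / 12)) (π / 12) := by
    obtain ⟨h₁, h₂⟩ := arctan_mem_Ioo x
    constructor <;> linarith
  refine ⟨?_, mem _, mem _, ?_, ?_⟩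
  · intro h
    have hq := sqrt_pos.2 hQ
    have := arctan_injective (mul_left_cancel₀ (by norm_num) h)
    rw [div_left_inj' hd] at this
    linarith
  · rintro θ (rfl | rfl) <;>
    · refine radius_solves_of_mul_eq_mul hs hp ?_
      rw [← mul_assoc, show (12 : ℝ) * (1 / 6) = 2 by norm_num, roots]
      simp
  · rintro θ ⟨hθ₁, hθ₂⟩ ⟨r, -, h₁, h₂⟩
    have h6 : arctan (tan (6 * θ)) = 6 * θ := arctan_tan (by linarith) (by linarith)
    have key := mul_eq_mul_of_add_mul_eq_zero h₁ h₂
    rw [show 12 * θ = 2 * arctan (tan (6 * θ)) by rw [h6]; ring, roots] at key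
    rcases key with h | h <;> [left; right] <;> rw [← h] <;> linarith
end
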